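/- Let V be a Gödel set having at least one accumulation point from above, i.e., some x ∈ V that is a limit of points of V strictly greater than x. Let L contain a unary predicate A and a 0-ary predicate (propositional atom) X. Then the sentence F := (∀x(A(x)∨X) ⊃ X) ∧ ∀x(((A(x)∨X) ⊃ X) ⊃ (A(x)∨X)) has no logically equivalent prenex sentence in G_V: no prenex L-sentence P satisfies I(F)=I(P) for all V-interpretations I. -/

import Mathlib

/-!
Take `x ∈ V` approached from above by points of `V`, and `x < s < 1`. Over the domain
`V ∩ (x, s)` let `P(y) = y` and `X = x`: then `∀x(P(x) ∨ X)` has value `inf P = x`, so `F` has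
value 1, while every atom has value at most `s`. Gluing at `x` (atoms above `x` become 1)
keeps value 1 for every Δ-free prenex sentence whose value was 1, because below the gap
`(s, 1)` a supremum equal to 1 must be attained and so existential witnesses survive. But
after gluing `P` is constantly 1, and `F` drops to `1 ⊃ x = x < 1`.
-/

namespace GodelPaper

/-- A first-order language: function and relation symbols of each arity. -/
structure Lang where
  Func : ℕ → Type
  Rel : ℕ → Type

/-- A Gödel set: a closed subset of [0,1] containing 0 and 1. -/
def GodelSet (V : Set ℝ) : Prop :=
  IsClosed V ∧ V ⊆ Set.Icc 0 1 ∧ (0:ℝ) ∈ V ∧ (1:ℝ) ∈ V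

/-- Terms with variables from `α`. -/
inductive Term (L : Lang) (α : Type) : Type
  | var : α → Term L α
  | func : ∀ {k}, L.Func k → (Fin k → Term L α) → Term L α

/-- A `V`-interpretation: nonempty domain, interpretation of function symbols,
and truth values in `V` for atomic sentences with parameters. -/
structure Interp (L : Lang) (V : Set ℝ) where
  Dom : Type
  dom_nonempty : Nonempty Dom
  funMap : ∀ {k}, L.Func k → (Fin k → Dom) → Dom
  relVal : ∀ {k}, L.Rel k → (Fin k → Dom) → ℝ
  relVal_mem : ∀ {k} (R : L.Rel k) (v : Fin k → Dom), relVal R v ∈ V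

def Term.eval {L : Lang} {V : Set ℝ} (I : Interp L V) {α : Type} (v : α → I.Dom) :
    Term L α → I.Dom
  | .var i => v i
  | .func f ts => I.funMap f fun j => Term.eval I v (ts j)

/-- Formulas of the Δ-extended language, with free variables among `Fin n`.
The quantifiers bind the *last* variable. Δ-free formulas (i.e. formulas of the
plain language) are singled out by the predicate `DeltaFree` below. -/
inductive Form (L : Lang) : ℕ → Type
  | falsum : ∀ {n}, Form L n
  | atom : ∀ {n k}, L.Rel k → (Fin k → Term L (Fin n)) → Form L n
  | conj : ∀ {n}, Form L n → Form L n → Form L n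
  | disj : ∀ {n}, Form L n → Form L n → Form L n
  | impl : ∀ {n}, Form L n → Form L n → Form L n
  | delta : ∀ {n}, Form L n → Form L n
  | all : ∀ {n}, Form L (n+1) → Form L n
  | ex : ∀ {n}, Form L (n+1) → Form L n

/-- The Gödel truth value of a formula under an interpretation and an
assignment of the free variables. -/
noncomputable def Form.val {L : Lang} {V : Set ℝ} (I : Interp L V) :
    ∀ {n}, Form L n → (Fin n → I.Dom) → ℝ
  | _, .falsum, _ => 0
  | _, .atom R ts, ρ => I.relVal R fun j => Term.eval I ρ (ts j)
  | _, .conj A B, ρ => min (Form.val I A ρ) (Form.val I B ρ)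
  | _, .disj A B, ρ => max (Form.val I A ρ) (Form.val I B ρ)
  | _, .impl A B, ρ => if Form.val I A ρ ≤ Form.val I B ρ then 1 else Form.val I B ρ
  | _, .delta A, ρ => if Form.val I A ρ = 1 then 1 else 0
  | _, .all A, ρ => sInf {v : ℝ | ∃ d : I.Dom, v = Form.val I A (Fin.snoc ρ d)}
  | _, .ex A, ρ => sSup {v : ℝ | ∃ d : I.Dom, v = Form.val I A (Fin.snoc ρ d)}

/-- The value of a sentence. -/
noncomputable def Form.sval {L : Lang} {V : Set ℝ} (I : Interp L V) (A : Form L 0) : ℝ :=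
  Form.val I A Fin.elim0

/-- `A` is valid in `G_V`. -/
def Valid {L : Lang} (V : Set ℝ) (A : Form L 0) : Prop :=
  ∀ I : Interp L V, Form.sval I A = 1

/-- `A` is 1-satisfiable in `G_V`. -/
def OneSat {L : Lang} (V : Set ℝ) (A : Form L 0) : Prop :=
  ∃ I : Interp L V, Form.sval I A = 1

/-- `A` is classically satisfiable: it takes value 1 under a `V`-interpretation
assigning only values in {0,1} to atomic sentences. -/
def ClassSat {L : Lang} (V : Set ℝ) (A : Form L 0) : Prop :=
  ∃ I : Interp L V,
    (∀ {k : ℕ} (R : L.Rel k) (v : Fin k → I.Dom), I.relVal R v = 0 ∨ I.relVal R v = 1) ∧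
    Form.sval I A = 1

/-- ¬A abbreviates A ⊃ ⊥. -/
def Form.not {L : Lang} {n : ℕ} (A : Form L n) : Form L n := Form.impl A Form.falsum

/-- A ↔ B abbreviates (A ⊃ B) ∧ (B ⊃ A). -/
def Form.iff {L : Lang} {n : ℕ} (A B : Form L n) : Form L n :=
  Form.conj (Form.impl A B) (Form.impl B A)

/-- Formulas of the plain language (no Δ). -/
def DeltaFree {L : Lang} : ∀ {n}, Form L n → Prop
  | _, .falsum => True
  | _, .atom _ _ => True
  | _, .conj A B => DeltaFree A ∧ DeltaFree B
  | _, .disj A B => DeltaFree A ∧ DeltaFree B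
  | _, .impl A B => DeltaFree A ∧ DeltaFree B
  | _, .delta _ => False
  | _, .all A => DeltaFree A
  | _, .ex A => DeltaFree A

/-- Quantifier-free formulas. -/
def QuantFree {L : Lang} : ∀ {n}, Form L n → Prop
  | _, .falsum => True
  | _, .atom _ _ => True
  | _, .conj A B => QuantFree A ∧ QuantFree B
  | _, .disj A B => QuantFree A ∧ QuantFree B
  | _, .impl A B => QuantFree A ∧ QuantFree B
  | _, .delta A => QuantFree A
  | _, .all _ => False
  | _, .ex _ => False

/-- Formulas containing no universal quantifier. -/
def AllFree {L : Lang} : ∀ {n}, Form L n → Prop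
  | _, .falsum => True
  | _, .atom _ _ => True
  | _, .conj A B => AllFree A ∧ AllFree B
  | _, .disj A B => AllFree A ∧ AllFree B
  | _, .impl A B => AllFree A ∧ AllFree B
  | _, .delta A => AllFree A
  | _, .all _ => False
  | _, .ex A => AllFree A

/-- Prenex formulas: a block of quantifiers followed by a quantifier-free matrix. -/
inductive IsPrenex {L : Lang} : ∀ {n}, Form L n → Prop
  | qf {n} {A : Form L n} : QuantFree A → IsPrenex A
  | all {n} {A : Form L (n+1)} : IsPrenex A → IsPrenex (Form.all A)
  | ex {n} {A : Form L (n+1)} : IsPrenex A → IsPrenex (Form.ex A)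

/-- Purely existential prenex formulas. -/
inductive ExPrenex {L : Lang} : ∀ {n}, Form L n → Prop
  | qf {n} {A : Form L n} : QuantFree A → ExPrenex A
  | ex {n} {A : Form L (n+1)} : ExPrenex A → ExPrenex (Form.ex A)

/-- The glued interpretation `I_ω`: atoms with value ≤ ω keep their value,
all other atoms get value 1. Same domain and function interpretations. -/
noncomputable def Interp.glue {L : Lang} {V : Set ℝ} (I : Interp L V) (ω : ℝ)
    (h1 : (1:ℝ) ∈ V) : Interp L V where
  Dom := I.Dom
  dom_nonempty := I.dom_nonempty
  funMap := fun {k} f v => I.funMap f v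
  relVal := fun {k} R v => if I.relVal R v ≤ ω then I.relVal R v else 1
  relVal_mem := fun {k} R v => by
    by_cases h : I.relVal R v ≤ ω
    · simpa [h] using I.relVal_mem R v
    · simpa [h] using h1

/-- The Gödel set `V_↑ = {1 - 1/k : k ≥ 1} ∪ {1}`. -/
def Vup : Set ℝ := {x : ℝ | ∃ k : ℕ, 1 ≤ k ∧ x = 1 - 1/(k:ℝ)} ∪ {1}

/-- The `m`-element Gödel set `V_m = {1 - 1/k : 1 ≤ k ≤ m-1} ∪ {1}`. -/
def Vfin (m : ℕ) : Set ℝ :=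
  {x : ℝ | ∃ k : ℕ, 1 ≤ k ∧ k ≤ m - 1 ∧ x = 1 - 1/(k:ℝ)} ∪ {1}

/-- Atomic formula built from a unary predicate. -/
def atom1 {L : Lang} (P : L.Rel 1) {n : ℕ} (t : Term L (Fin n)) : Form L n :=
  Form.atom P fun _ => t

/-- Atomic formula built from a 0-ary predicate (propositional atom). -/
def atom0 {L : Lang} (X : L.Rel 0) {n : ℕ} : Form L n :=
  Form.atom X fun i => i.elim0

def Term.rename {L : Lang} {α β : Type} (f : α → β) : Term L α → Term L β
  | .var i => .var (f i)
  | .func g ts => .func g fun j => Term.rename f (ts j)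

def Form.rename {L : Lang} : ∀ {m n}, (Fin m → Fin n) → Form L m → Form L n
  | _, _, _, .falsum => .falsum
  | _, _, f, .atom R ts => .atom R fun j => (ts j).rename f
  | _, _, f, .conj A B => .conj (A.rename f) (B.rename f)
  | _, _, f, .disj A B => .disj (A.rename f) (B.rename f)
  | _, _, f, .impl A B => .impl (A.rename f) (B.rename f)
  | _, _, f, .delta A => .delta (A.rename f)
  | _, _, f, .all A =>
      .all (A.rename (Fin.lastCases (Fin.last _) fun i => Fin.castSucc (f i)))
  | _, _, f, .ex A =>
      .ex (A.rename (Fin.lastCases (Fin.last _) fun i => Fin.castSucc (f i)))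

/-- Weakening: regard a formula with `n` free variables as one with `n+1`
free variables (not using the new last variable). -/
def Form.lift {L : Lang} {n : ℕ} (A : Form L n) : Form L (n+1) :=
  A.rename Fin.castSucc

def Term.subst {L : Lang} {α β : Type} (σ : α → Term L β) : Term L α → Term L β
  | .var i => σ i
  | .func g ts => .func g fun j => Term.subst σ (ts j)

def Form.subst {L : Lang} : ∀ {m n}, (Fin m → Term L (Fin n)) → Form L m → Form L n
  | _, _, _, .falsum => .falsum
  | _, _, σ, .atom R ts => .atom R fun j => (ts j).subst σ
  | _, _, σ, .conj A B => .conj (A.subst σ) (B.subst σ)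
  | _, _, σ, .disj A B => .disj (A.subst σ) (B.subst σ)
  | _, _, σ, .impl A B => .impl (A.subst σ) (B.subst σ)
  | _, _, σ, .delta A => .delta (A.subst σ)
  | _, _, σ, .all A =>
      .all (A.subst (Fin.lastCases (.var (Fin.last _))
        fun i => (σ i).rename Fin.castSucc))
  | _, _, σ, .ex A =>
      .ex (A.subst (Fin.lastCases (.var (Fin.last _))
        fun i => (σ i).rename Fin.castSucc))

/-- The language `L ∪ {f}` with one new function symbol of arity `a`. -/
def Lang.addFunc (L : Lang) (a : ℕ) : Lang where
  Func := fun k => L.Func k ⊕ PLift (k = a)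
  Rel := L.Rel

/-- The new function symbol of `L.addFunc a`. -/
def newFunc (L : Lang) (a : ℕ) : (L.addFunc a).Func a := Sum.inr ⟨rfl⟩

def Term.emb {L : Lang} {a : ℕ} {α : Type} : Term L α → Term (L.addFunc a) α
  | .var i => .var i
  | .func g ts => .func (Sum.inl g) fun j => Term.emb (ts j)

/-- Embedding of `L`-formulas into the language with the extra function symbol. -/
def Form.emb {L : Lang} {a : ℕ} : ∀ {n}, Form L n → Form (L.addFunc a) n
  | _, .falsum => .falsum
  | _, .atom R ts => .atom R fun j => (ts j).emb
  | _, .conj A B => .conj A.emb B.emb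
  | _, .disj A B => .disj A.emb B.emb
  | _, .impl A B => .impl A.emb B.emb
  | _, .delta A => .delta A.emb
  | _, .all A => .all A.emb
  | _, .ex A => .ex A.emb

/-- Prefix of `n` existential quantifiers (outermost quantifier binds variable 0). -/
def Form.exN {L : Lang} : ∀ n, Form L n → Form L 0
  | 0, A => A
  | n+1, A => Form.exN n (Form.ex A)

/-- Prefix of `n` universal quantifiers (outermost quantifier binds variable 0). -/
def Form.allN {L : Lang} : ∀ n, Form L n → Form L 0
  | 0, A => A
  | n+1, A => Form.allN n (Form.all A)

section RealFamilies

variable {ι : Type*} {f : ι → ℝ}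

theorem eq_one_of_iInf_eq_one (hf : ∀ i, f i ∈ Set.Icc (0:ℝ) 1) (h : ⨅ i, f i = 1) (i : ι) :
    f i = 1 :=
  le_antisymm (hf i).2 (h ▸ ciInf_le ⟨0, Set.forall_mem_range.2 fun j => (hf j).1⟩ i)

theorem iSup_eq_one_of_eq_one [Nonempty ι] (hf : ∀ i, f i ≤ 1) {i : ι} (hi : f i = 1) :
    ⨆ i, f i = 1 :=
  le_antisymm (ciSup_le hf) (le_ciSup_of_le ⟨1, Set.forall_mem_range.2 hf⟩ i hi.ge)

theorem exists_eq_one_of_iSup_eq_one [Nonempty ι] {s : ℝ} (hs : s < 1)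
    (hf : ∀ i, f i = 1 ∨ f i ≤ s) (h : ⨆ i, f i = 1) : ∃ i, f i = 1 := by
  by_contra! hne
  have : ⨆ i, f i ≤ s := ciSup_le fun i => (hf i).resolve_left (hne i)
  linarith

end RealFamilies

theorem godelSet_Icc_union_one {s : ℝ} (hs0 : 0 ≤ s) (hs1 : s ≤ 1) :
    GodelSet (Set.Icc 0 s ∪ {1}) :=
  ⟨isClosed_Icc.union isClosed_singleton,
    Set.union_subset (Set.Icc_subset_Icc_right hs1) (by simp),
    Or.inl ⟨le_rfl, hs0⟩, Or.inr rfl⟩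

section Semantics

variable {L : Lang} {V : Set ℝ}

theorem val_all (I : Interp L V) {n : ℕ} (A : Form L (n+1)) (ρ : Fin n → I.Dom) :
    Form.val I (.all A) ρ = ⨅ d, Form.val I A (Fin.snoc ρ d) := by
  rw [Form.val, iInf, Set.range]
  simp only [eq_comm]

theorem val_ex (I : Interp L V) {n : ℕ} (A : Form L (n+1)) (ρ : Fin n → I.Dom) :
    Form.val I (.ex A) ρ = ⨆ d, Form.val I A (Fin.snoc ρ d) := by
  rw [Form.val, iSup, Set.range]
  simp only [eq_comm]

theorem val_mem_of_relVal_mem {W : Set ℝ} (hW : GodelSet W) (I : Interp L V)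
    (hI : ∀ {k} (R : L.Rel k) (w : Fin k → I.Dom), I.relVal R w ∈ W) {n : ℕ} (A : Form L n)
    (ρ : Fin n → I.Dom) : Form.val I A ρ ∈ W := by
  obtain ⟨hWc, hW01, hW0, hW1⟩ := hW
  have := I.dom_nonempty
  induction A with
  | falsum => exact hW0
  | atom R ts => exact hI R _
  | conj A B ihA ihB => rcases min_choice (Form.val I A ρ) (Form.val I B ρ) with h | h <;>
      simp only [Form.val, h, ihA, ihB]
  | disj A B ihA ihB => rcases max_choice (Form.val I A ρ) (Form.val I B ρ) with h | h <;>
      simp only [Form.val, h, ihA, ihB]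
  | impl A B ihA ihB => rw [Form.val]; split_ifs; exacts [hW1, ihB ρ]
  | delta A ih => rw [Form.val]; split_ifs; exacts [hW1, hW0]
  | all A ih =>
      rw [val_all]
      exact hWc.closure_subset_iff.2 (Set.range_subset_iff.2 fun d => ih _)
        (csInf_mem_closure (Set.range_nonempty _) ⟨0, by
          rintro _ ⟨d, rfl⟩; exact (hW01 (ih _)).1⟩)
  | ex A ih =>
      rw [val_ex]
      exact hWc.closure_subset_iff.2 (Set.range_subset_iff.2 fun d => ih _)
        (csSup_mem_closure (Set.range_nonempty _) ⟨1, by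
          rintro _ ⟨d, rfl⟩; exact (hW01 (ih _)).2⟩)

end Semantics

section Glue

variable {L : Lang} {V : Set ℝ}

/-- The map on truth values effected by `Interp.glue ω`. -/
noncomputable def raiseAbove (ω a : ℝ) : ℝ := if a ≤ ω then a else 1

theorem raiseAbove_monotone {ω : ℝ} (hω : ω < 1) : Monotone (raiseAbove ω) := by
  intro a b hab
  unfold raiseAbove
  split_ifs <;> linarith

theorem raiseAbove_impl {ω : ℝ} (hω : ω < 1) (a b : ℝ) :
    raiseAbove ω (if a ≤ b then 1 else b) =
      if raiseAbove ω a ≤ raiseAbove ω b then 1 else raiseAbove ω b := by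
  unfold raiseAbove
  split_ifs <;> linarith

theorem Term.eval_glue (I : Interp L V) (ω : ℝ) (h1 : (1:ℝ) ∈ V) {α : Type} (v : α → I.Dom) :
    ∀ t : Term L α, Term.eval (I.glue ω h1) v t = Term.eval I v t
  | .var _ => rfl
  | .func f ts => by
      simp only [Term.eval, Term.eval_glue I ω h1 v (ts _)]
      rfl

theorem val_glue_of_quantFree (I : Interp L V) {ω : ℝ} (hω0 : 0 ≤ ω) (hω1 : ω < 1)
    (h1 : (1:ℝ) ∈ V) {n : ℕ} (A : Form L n) (hq : QuantFree A) (hd : DeltaFree A)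
    (ρ : Fin n → I.Dom) :
    Form.val (I.glue ω h1) A ρ = raiseAbove ω (Form.val I A ρ) := by
  induction A with
  | falsum => simp [Form.val, raiseAbove, hω0]
  | atom R ts =>
      simp only [Form.val, Term.eval_glue]
      rfl
  | conj A B ihA ihB =>
      simp only [Form.val]; rw [ihA hq.1 hd.1, ihB hq.2 hd.2, (raiseAbove_monotone hω1).map_min]
  | disj A B ihA ihB =>
      simp only [Form.val]; rw [ihA hq.1 hd.1, ihB hq.2 hd.2, (raiseAbove_monotone hω1).map_max]
  | impl A B ihA ihB =>
      simp only [Form.val]; rw [ihA hq.1 hd.1, ihB hq.2 hd.2, raiseAbove_impl hω1]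
  | delta => exact hd.elim
  | all => exact hq.elim
  | ex => exact hq.elim

theorem glue_relVal_of_le (I : Interp L V) {ω : ℝ} (h1 : (1:ℝ) ∈ V) {k : ℕ} (R : L.Rel k)
    (w : Fin k → I.Dom) (h : I.relVal R w ≤ ω) : (I.glue ω h1).relVal R w = I.relVal R w :=
  if_pos h

theorem glue_relVal_of_lt (I : Interp L V) {ω : ℝ} (h1 : (1:ℝ) ∈ V) {k : ℕ} (R : L.Rel k)
    (w : Fin k → I.Dom) (h : ω < I.relVal R w) : (I.glue ω h1).relVal R w = 1 :=
  if_neg h.not_ge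

end Glue

section Prenex

variable {L : Lang} {V : Set ℝ}

theorem val_mem_Icc (hV : V ⊆ Set.Icc 0 1) (I : Interp L V) {n : ℕ} (A : Form L n)
    (ρ : Fin n → I.Dom) : Form.val I A ρ ∈ Set.Icc (0:ℝ) 1 := by
  simpa using val_mem_of_relVal_mem (godelSet_Icc_union_one zero_le_one le_rfl) I
    (fun R w => Or.inl (hV (I.relVal_mem R w))) A ρ

theorem val_eq_one_or_le (hV : V ⊆ Set.Icc 0 1) (I : Interp L V) {s : ℝ} (hs0 : 0 ≤ s)
    (hs1 : s ≤ 1) (hI : ∀ {k} (R : L.Rel k) (w : Fin k → I.Dom), I.relVal R w ≤ s) {n : ℕ}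
    (A : Form L n) (ρ : Fin n → I.Dom) : Form.val I A ρ = 1 ∨ Form.val I A ρ ≤ s := by
  rcases val_mem_of_relVal_mem (godelSet_Icc_union_one hs0 hs1) I
    (fun R w => Or.inl ⟨(hV (I.relVal_mem R w)).1, hI R w⟩) A ρ with h | h
  exacts [Or.inr h.2, Or.inl h]

theorem val_all_eq_one (I : Interp L V) {n : ℕ} {A : Form L (n+1)} {ρ : Fin n → I.Dom}
    (h : ∀ d, Form.val I A (Fin.snoc ρ d) = 1) : Form.val I (.all A) ρ = 1 := by
  have := I.dom_nonempty
  simp only [val_all, h, ciInf_const]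

theorem val_ex_eq_one (hV : V ⊆ Set.Icc 0 1) (I : Interp L V) {n : ℕ} {A : Form L (n+1)}
    {ρ : Fin n → I.Dom} {d : I.Dom} (h : Form.val I A (Fin.snoc ρ d) = 1) :
    Form.val I (.ex A) ρ = 1 := by
  have := I.dom_nonempty
  exact (val_ex I A ρ).trans (iSup_eq_one_of_eq_one (fun _ => (val_mem_Icc hV I A _).2) h)

/-- Values avoid the gap `(s, 1)`, so a supremum equal to 1 is attained and existential
witnesses survive the gluing. -/
theorem val_glue_eq_one_of_isPrenex (hV : V ⊆ Set.Icc 0 1) (h1 : (1:ℝ) ∈ V) (I : Interp L V)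
    {s ω : ℝ} (hs0 : 0 ≤ s) (hs1 : s < 1) (hω0 : 0 ≤ ω) (hω1 : ω < 1)
    (hI : ∀ {k} (R : L.Rel k) (w : Fin k → I.Dom), I.relVal R w ≤ s) {n : ℕ} {A : Form L n}
    (hA : IsPrenex A) (hd : DeltaFree A) (ρ : Fin n → I.Dom) (h : Form.val I A ρ = 1) :
    Form.val (I.glue ω h1) A ρ = 1 := by
  have := I.dom_nonempty
  induction hA with
  | qf hq =>
      rw [val_glue_of_quantFree I hω0 hω1 h1 _ hq hd, h, raiseAbove, if_neg (by linarith)]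
  | @all _ B _ ih =>
      rw [val_all] at h
      have hB := eq_one_of_iInf_eq_one (fun _ => val_mem_Icc hV I B _) h
      exact val_all_eq_one (I.glue ω h1) fun d => ih hd _ (hB d)
  | @ex _ B _ ih =>
      rw [val_ex] at h
      obtain ⟨d, hd1⟩ := exists_eq_one_of_iSup_eq_one hs1
        (fun _ => val_eq_one_or_le hV I hs0 hs1.le hI B _) h
      exact val_ex_eq_one hV (I.glue ω h1) (ih hd _ hd1)

end Prenex

section Counterexample

variable {L : Lang} {V : Set ℝ} (P : L.Rel 1) (X : L.Rel 0)

open Classical in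
noncomputable def Interp.ofUnary {D : Type} [Nonempty D] (p : D → ℝ) (hp : ∀ d, p d ∈ V)
    {c : ℝ} (hc : c ∈ V) : Interp L V where
  Dom := D
  dom_nonempty := ‹_›
  funMap _ _ := Classical.arbitrary D
  relVal {k} R w :=
    if h : (⟨k, R⟩ : Σ k, L.Rel k) = ⟨1, P⟩ then
      p (w ⟨0, Nat.lt_of_lt_of_eq Nat.one_pos (congrArg Sigma.fst h).symm⟩)
    else c
  relVal_mem R w := by
    split_ifs
    exacts [hp _, hc]

variable {D : Type} [Nonempty D] {p : D → ℝ} {hp : ∀ d, p d ∈ V} {c : ℝ} {hc : c ∈ V}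

theorem Interp.ofUnary_relVal_self (w : Fin 1 → D) :
    (Interp.ofUnary P p hp hc).relVal P w = p (w 0) :=
  dif_pos rfl

theorem Interp.ofUnary_relVal_of_arity_zero (w : Fin 0 → D) :
    (Interp.ofUnary P p hp hc).relVal X w = c := by
  simp only [Interp.ofUnary]
  exact dif_neg fun h => zero_ne_one (congrArg Sigma.fst h)

theorem Interp.ofUnary_relVal_le {s : ℝ} (hps : ∀ d, p d ≤ s) (hcs : c ≤ s) {k : ℕ}
    (R : L.Rel k) (w : Fin k → D) : (Interp.ofUnary P p hp hc).relVal R w ≤ s := by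
  simp only [Interp.ofUnary]
  split_ifs
  exacts [hps _, hcs]

def orAtom : Form L 1 := .disj (atom1 P (.var 0)) (atom0 X)

def sentenceF : Form L 0 :=
  .conj (.impl (.all (orAtom P X)) (atom0 X))
    (.all (.impl (.impl (orAtom P X) (atom0 X)) (orAtom P X)))

/-- When every `P(d)` lies strictly above `X`, the second conjunct of `F` is valid and `F`
reduces to `(∀x P(x)) ⊃ X`. -/
theorem sval_sentenceF (hV : V ⊆ Set.Icc 0 1) (I : Interp L V) {x : ℝ} {q : I.Dom → ℝ}
    (hX : ∀ w, I.relVal X w = x) (hP : ∀ d, I.relVal P (fun _ => d) = q d) (hqx : ∀ d, x < q d) :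
    Form.sval I (sentenceF P X) = if ⨅ d, q d ≤ x then 1 else x := by
  have hx1 : x ≤ 1 := hX Fin.elim0 ▸ (hV (I.relVal_mem X _)).2
  have hXval : ∀ {n} (ρ : Fin n → I.Dom), Form.val I (atom0 X) ρ = x := fun _ => hX _
  have hD : ∀ d, Form.val I (orAtom P X) (Fin.snoc Fin.elim0 d) = q d := by
    intro d
    have hsnoc : (Fin.snoc Fin.elim0 d : Fin 1 → I.Dom) 0 = d := rfl
    simp [orAtom, Form.val, atom1, hXval, Term.eval, hsnoc, hP, (hqx d).le]
  have hG : Form.val I (.all (.impl (.impl (orAtom P X) (atom0 X)) (orAtom P X))) Fin.elim0 = 1 :=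
    val_all_eq_one I fun d => by simp [Form.val, hD, hXval, not_le.2 (hqx d), (hqx d).le]
  simp only [Form.sval, sentenceF]
  rw [Form.val, hG, Form.val, val_all, hXval]
  simp only [hD]
  split_ifs <;> simp [hx1]

theorem sval_sentenceF_ofUnary (hV : V ⊆ Set.Icc 0 1) {x : ℝ} (hx : x ∈ V)
    (hpx : ∀ d, x < p d) :
    Form.sval (Interp.ofUnary P p hp hx) (sentenceF P X) = if ⨅ d, p d ≤ x then 1 else x :=
  sval_sentenceF P X hV _ (Interp.ofUnary_relVal_of_arity_zero (D := D) P X)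
    (Interp.ofUnary_relVal_self (D := D) P fun _ => ·) hpx

theorem sval_glue_sentenceF_ofUnary (hV : V ⊆ Set.Icc 0 1) (h1 : (1:ℝ) ∈ V) {x : ℝ}
    (hx : x ∈ V) (hx1 : x < 1) (hpx : ∀ d, x < p d) :
    Form.sval ((Interp.ofUnary P p hp hx).glue x h1) (sentenceF P X) = x := by
  have hX : ∀ w : Fin 0 → D, ((Interp.ofUnary P p hp hx).glue x h1).relVal X w = x := by
    intro w
    have hIX : (Interp.ofUnary P p hp hx).relVal X w = x :=
      Interp.ofUnary_relVal_of_arity_zero P X w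
    exact (glue_relVal_of_le (Interp.ofUnary P p hp hx) h1 X w hIX.le).trans hIX
  have hP : ∀ d : D, ((Interp.ofUnary P p hp hx).glue x h1).relVal P (fun _ => d) = 1 :=
    fun d => glue_relVal_of_lt _ h1 P _ ((Interp.ofUnary_relVal_self P _).trans_gt (hpx d))
  have : Nonempty ((Interp.ofUnary P p hp hx).glue x h1).Dom := ‹Nonempty D›
  rw [sval_sentenceF P X hV _ hX hP fun _ => hx1, ciInf_const]
  exact if_neg hx1.not_ge

end Counterexample

section Accumulation

variable {V : Set ℝ} {x s : ℝ} (hacc : ∀ ε > (0:ℝ), (V ∩ Set.Ioo x (x + ε)).Nonempty)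
include hacc

theorem exists_mem_Ioo_lt_add (hxs : x < s) {ε : ℝ} (hε : 0 < ε) :
    ∃ y ∈ V ∩ Set.Ioo x s, y < x + ε := by
  obtain ⟨y, hyV, hxy, hy⟩ := hacc (min ε (s - x)) (lt_min hε (sub_pos.2 hxs))
  exact ⟨y, ⟨hyV, hxy, by linarith [min_le_right ε (s - x)]⟩,
    hy.trans_le (by linarith [min_le_left ε (s - x)])⟩

theorem iInf_subtype_Ioo_le (hxs : x < s) : ⨅ y : ↥(V ∩ Set.Ioo x s), (y : ℝ) ≤ x := by
  refine le_of_forall_pos_lt_add fun ε hε => ?_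
  obtain ⟨y, hy, hyε⟩ := exists_mem_Ioo_lt_add hacc hxs hε
  exact (ciInf_le ⟨x, Set.forall_mem_range.2 fun y => y.2.2.1.le⟩ ⟨y, hy⟩).trans_lt hyε

end Accumulation

/-- If the Gödel set `V` has an accumulation point from above
(some `x ∈ V` which is a limit of points of `V` strictly greater than `x`),
and `L` has a unary predicate `P` and a propositional atom `X`, then the
sentence `F = (∀x(P(x)∨X) ⊃ X) ∧ ∀x(((P(x)∨X) ⊃ X) ⊃ (P(x)∨X))` has no
logically equivalent prenex sentence in `G_V`. -/
theorem stmt_9 {L : Lang} {V : Set ℝ} (hV : GodelSet V)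
    (hacc : ∃ x ∈ V, ∀ ε > (0:ℝ), (V ∩ Set.Ioo x (x + ε)).Nonempty)
    (P : L.Rel 1) (X : L.Rel 0) :
    ¬ ∃ Q : Form L 0, IsPrenex Q ∧ DeltaFree Q ∧
        ∀ I : Interp L V,
          Form.sval I
            (Form.conj
              (Form.impl (Form.all (Form.disj (atom1 P (Term.var 0)) (atom0 X)))
                (atom0 X))
              (Form.all (Form.impl
                (Form.impl (Form.disj (atom1 P (Term.var 0)) (atom0 X)) (atom0 X))
                (Form.disj (atom1 P (Term.var 0)) (atom0 X))))) =
          Form.sval I Q := by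
  rintro ⟨Q, hQ, hQΔ, hFQ⟩
  obtain ⟨x, hxV, hacc⟩ := hacc
  obtain ⟨-, hV01, -, h1V⟩ := hV
  have hx0 : 0 ≤ x := (hV01 hxV).1
  have hx1 : x < 1 := by
    obtain ⟨y, hyV, hxy, -⟩ := hacc 1 one_pos
    exact hxy.trans_le (hV01 hyV).2
  obtain ⟨s, hxs, hs1⟩ := exists_between hx1
  obtain ⟨y₀, hy₀, -⟩ := exists_mem_Ioo_lt_add hacc hxs one_pos
  let D := ↥(V ∩ Set.Ioo x s)
  have : Nonempty D := ⟨⟨y₀, hy₀⟩⟩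
  let I : Interp L V := Interp.ofUnary P (Subtype.val : D → ℝ) (fun y => y.2.1) hxV
  have hIF : Form.sval I (sentenceF P X) = 1 := by
    rw [sval_sentenceF_ofUnary P X hV01 hxV fun y => y.2.2.1,
      if_pos (iInf_subtype_Ioo_le hacc hxs)]
  have hIs : ∀ {k} (R : L.Rel k) (w : Fin k → D), I.relVal R w ≤ s :=
    Interp.ofUnary_relVal_le P (fun y => y.2.2.2.le) hxs.le
  have hJQ : Form.sval (I.glue x h1V) Q = 1 :=
    val_glue_eq_one_of_isPrenex hV01 h1V I (hx0.trans hxs.le) hs1 hx0 hx1 hIs hQ hQΔ _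
      ((hFQ I).symm.trans hIF)
  have hJF : Form.sval (I.glue x h1V) (sentenceF P X) = x :=
    sval_glue_sentenceF_ofUnary P X hV01 h1V hxV hx1 fun y : D => y.2.2.1
  linarith [(hFQ _).symm.trans hJF]

end GodelPaper
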